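/- If the probability measures μ^i have full support on S_i (μ^i_x > 0 for all x ∈ S_i, i = 1,2), then the sequence of relaxation values τ_r^s(y¹,y²) is nondecreasing, bounded above by τ^s, and converges to τ^s in finitely many steps: there exists r₀ such that τ_r^s(y¹,y²) = τ^s for all r ≥ r₀. -/

import Mathlib

/-!
For `μ = ∑_{x ∈ S} μ_x δ_x`, the quadratic form of `M_r(θ y)` at the coefficient vector of a
polynomial `p` of degree `≤ r` is `∑_{x ∈ S} μ_x θ(x) p(x)²`. So `M_r(θ y) ⪰ 0` as soon as
`θ ≥ 0` on `S`; conversely, once `r ≥ |S|` there is, for each `x₀ ∈ S`, a product of affine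
factors of degree `< |S|` vanishing on `S \ {x₀}` but not at `x₀`, and testing against it gives
`μ_{x₀} θ(x₀) p(x₀)² ≥ 0`, i.e. `θ(x₀) ≥ 0`. Hence for `r ≥ max(|S₁|, |S₂|)` the relaxation
and the original problem have the same feasible set. Monotonicity in `r` holds because
`M_r` is a principal submatrix of `M_{r+1}`.
-/

noncomputable section
open Classical Finset Matrix

/-- Multi-indices in `n` variables of total degree at most `r`. -/
abbrev MIdx (n r : ℕ) := {α : Fin n → ℕ // ∑ i, α i ≤ r}

instance MIdx.fintype (n r : ℕ) : Fintype (MIdx n r) := by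
  have h : ∀ a : MIdx n r, ∀ i, a.1 i ≤ r := fun a i =>
    le_trans (Finset.single_le_sum (fun j _ => Nat.zero_le (a.1 j)) (Finset.mem_univ i)) a.2
  have hinj : Function.Injective
      (fun a : MIdx n r => (fun i => (⟨a.1 i, Nat.lt_succ_of_le (h a i)⟩ : Fin (r+1)))) := by
    intro a b hab
    apply Subtype.ext; funext i
    have := congrFun hab i
    simpa [Fin.mk.injEq] using this
  have : Finite (MIdx n r) := Finite.of_injective _ hinj
  exact Fintype.ofFinite _

/-- The monomial `x^α = x₁^{α₁} ⋯ x_n^{α_n}`. -/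
def mono {n : ℕ} (x : Fin n → ℝ) (α : Fin n → ℕ) : ℝ := ∏ i, x i ^ α i

/-- Moments `y_α = ∑_{x ∈ S} μ_x x^α` of the measure `μ = ∑_{x∈S} μ_x δ_x`. -/
def moments {n : ℕ} (S : Finset (Fin n → ℝ)) (μ : (Fin n → ℝ) → ℝ) (α : Fin n → ℕ) : ℝ :=
  ∑ x ∈ S, μ x * mono x α

/-- The localizing matrix `M_r(θ y)(α,β) = ∑_γ θ_γ y_{α+β+γ}`. -/
def locMat (n r : ℕ) (θ : MvPolynomial (Fin n) ℝ) (y : (Fin n → ℕ) → ℝ) :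
    Matrix (MIdx n r) (MIdx n r) ℝ :=
  fun α β => ∑ γ ∈ θ.support, θ.coeff γ * y (fun i => α.1 i + β.1 i + γ i)

/-- Optimal value (infimum, in the extended reals) of the original separation problem `P^s`
for datasets `S₁`, `S₂`, feasible set `Θ` and objective `f`. -/
def sepVal {n : ℕ} (Θ : Set (MvPolynomial (Fin n) ℝ)) (f : MvPolynomial (Fin n) ℝ → ℝ)
    (S1 S2 : Finset (Fin n → ℝ)) : EReal :=
  sInf ((fun θ => ((f θ : ℝ) : EReal)) ''
    {θ | θ ∈ Θ ∧ (∀ x ∈ S1, 0 ≤ MvPolynomial.eval x θ) ∧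
      (∀ x ∈ S2, MvPolynomial.eval x θ ≤ 0)})

/-- Optimal value (infimum, in the extended reals) of the moment relaxation `P^s_r(y¹,y²)`. -/
def relaxVal {n : ℕ} (Θ : Set (MvPolynomial (Fin n) ℝ)) (f : MvPolynomial (Fin n) ℝ → ℝ)
    (r : ℕ) (y1 y2 : (Fin n → ℕ) → ℝ) : EReal :=
  sInf ((fun θ => ((f θ : ℝ) : EReal)) ''
    {θ | θ ∈ Θ ∧ (locMat n r θ y1).PosSemidef ∧ (locMat n r (-θ) y2).PosSemidef})

open MvPolynomial

section

variable {n r : ℕ}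

lemma mono_add (x : Fin n → ℝ) (a b : Fin n → ℕ) : mono x (a + b) = mono x a * mono x b := by
  simp only [mono, Pi.add_apply, pow_add, prod_mul_distrib]

lemma locMat_moments_apply (θ : MvPolynomial (Fin n) ℝ) (S : Finset (Fin n → ℝ))
    (μ : (Fin n → ℝ) → ℝ) (α β : MIdx n r) :
    locMat n r θ (moments S μ) α β = ∑ x ∈ S, μ x * eval x θ * (mono x α.1 * mono x β.1) := by
  simp only [locMat, moments, mul_sum]
  rw [sum_comm]
  refine sum_congr rfl fun x _ => ?_
  rw [eval_eq', mul_sum, sum_mul]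
  refine sum_congr rfl fun γ _ => ?_
  rw [show (fun i => α.1 i + β.1 i + γ i) = α.1 + β.1 + ⇑γ from rfl, mono_add, mono_add]
  simp only [mono]
  ring

lemma dotProduct_locMat_moments_mulVec (θ : MvPolynomial (Fin n) ℝ) (S : Finset (Fin n → ℝ))
    (μ : (Fin n → ℝ) → ℝ) (u : MIdx n r → ℝ) :
    u ⬝ᵥ locMat n r θ (moments S μ) *ᵥ u
      = ∑ x ∈ S, μ x * eval x θ * (∑ α, u α * mono x α.1) ^ 2 := by
  simp only [dotProduct, mulVec, locMat_moments_apply, sq, mul_sum, sum_mul]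
  rw [sum_comm (s := S)]
  refine sum_congr rfl fun α _ => ?_
  rw [sum_comm (s := S)]
  refine sum_congr rfl fun β _ => sum_congr rfl fun x _ => ?_
  ring

lemma locMat_isHermitian (θ : MvPolynomial (Fin n) ℝ) (y : (Fin n → ℕ) → ℝ) :
    (locMat n r θ y).IsHermitian := by
  ext α β
  simp only [conjTranspose_apply, star_trivial, locMat, add_comm (α.1 _)]

lemma posSemidef_locMat_moments {θ : MvPolynomial (Fin n) ℝ} {S : Finset (Fin n → ℝ)}
    {μ : (Fin n → ℝ) → ℝ} (hμ : ∀ x ∈ S, 0 ≤ μ x) (hθ : ∀ x ∈ S, 0 ≤ eval x θ) :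
    (locMat n r θ (moments S μ)).PosSemidef := by
  refine posSemidef_iff_dotProduct_mulVec.mpr ⟨locMat_isHermitian θ _, fun u => ?_⟩
  rw [star_trivial, dotProduct_locMat_moments_mulVec]
  exact sum_nonneg fun x hx => mul_nonneg (mul_nonneg (hμ x hx) (hθ x hx)) (sq_nonneg _)

lemma sum_coeff_mul_mono_eq_eval {p : MvPolynomial (Fin n) ℝ} (hp : p.totalDegree ≤ r)
    (x : Fin n → ℝ) :
    ∑ α : MIdx n r, p.coeff (Finsupp.equivFunOnFinite.symm α.1) * mono x α.1 = eval x p := by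
  rw [eval_eq']
  refine sum_bij_ne_zero (fun α _ _ => Finsupp.equivFunOnFinite.symm α.1) ?_ ?_ ?_ ?_
  · intro α _ hα
    exact mem_support_iff.mpr (left_ne_zero_of_mul hα)
  · intro α _ _ β _ _ hαβ
    exact Subtype.ext (Finsupp.equivFunOnFinite.symm.injective hαβ)
  · intro γ hγ hγ0
    have hdeg : ∑ i, γ i ≤ r := by
      have := le_totalDegree hγ
      rw [Finsupp.sum_fintype _ _ (fun _ => rfl)] at this
      omega
    exact ⟨⟨γ, hdeg⟩, mem_univ _, by simpa [mono] using hγ0, by simp⟩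
  · intro α _ _
    rfl

lemma exists_eval_ne_zero_forall_eval_eq_zero (T : Finset (Fin n → ℝ)) {x₀ : Fin n → ℝ}
    (hx₀ : x₀ ∉ T) :
    ∃ p : MvPolynomial (Fin n) ℝ, p.totalDegree ≤ #T ∧ eval x₀ p ≠ 0 ∧ ∀ x ∈ T, eval x p = 0 := by
  induction T using Finset.induction_on with
  | empty => exact ⟨1, by simp, by simp, by simp⟩
  | insert a T haT ih =>
    obtain ⟨p, hdeg, hp₀, hp⟩ := ih (fun h => hx₀ (mem_insert_of_mem h))
    obtain ⟨i, hi⟩ := Function.ne_iff.mp (ne_of_mem_of_not_mem (mem_insert_self a T) hx₀)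
    refine ⟨(X i - C (a i)) * p, ?_, ?_, ?_⟩
    · calc ((X i - C (a i)) * p).totalDegree
          ≤ (X i - C (a i) : MvPolynomial (Fin n) ℝ).totalDegree + p.totalDegree :=
            totalDegree_mul _ _
        _ ≤ 1 + #T := by
            gcongr
            exact (totalDegree_sub _ _).trans (by simp [totalDegree_X, totalDegree_C])
        _ = #(insert a T) := by rw [card_insert_of_notMem haT, add_comm]
    · simpa [sub_eq_zero] using ⟨Ne.symm hi, hp₀⟩
    · intro x hx
      rcases mem_insert.mp hx with rfl | hx
      · simp
      · simp [hp x hx]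

lemma eval_nonneg_of_posSemidef_locMat_moments {θ : MvPolynomial (Fin n) ℝ}
    {S : Finset (Fin n → ℝ)} {μ : (Fin n → ℝ) → ℝ} (hμ : ∀ x ∈ S, 0 < μ x) (hr : #S ≤ r)
    (h : (locMat n r θ (moments S μ)).PosSemidef) {x₀ : Fin n → ℝ} (hx₀ : x₀ ∈ S) :
    0 ≤ eval x₀ θ := by
  obtain ⟨p, hdeg, hp₀, hp⟩ :=
    exists_eval_ne_zero_forall_eval_eq_zero (S.erase x₀) (notMem_erase x₀ S)
  have hpr : p.totalDegree ≤ r := hdeg.trans ((card_erase_le).trans hr)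
  have key := h.dotProduct_mulVec_nonneg fun α => p.coeff (Finsupp.equivFunOnFinite.symm α.1)
  simp only [star_trivial, dotProduct_locMat_moments_mulVec, sum_coeff_mul_mono_eq_eval hpr] at key
  rw [← add_sum_erase _ _ hx₀, sum_eq_zero fun x hx => by rw [hp x hx]; ring, add_zero] at key
  exact (mul_nonneg_iff_of_pos_left (hμ x₀ hx₀)).mp
    ((mul_nonneg_iff_of_pos_right (by positivity)).mp key)

lemma posSemidef_locMat_of_le {s : ℕ} (hrs : r ≤ s) {θ : MvPolynomial (Fin n) ℝ}
    {y : (Fin n → ℕ) → ℝ} (h : (locMat n s θ y).PosSemidef) : (locMat n r θ y).PosSemidef :=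
  h.submatrix fun α : MIdx n r => ⟨α.1, α.2.trans hrs⟩

end

section

variable {n : ℕ} (Θ : Set (MvPolynomial (Fin n) ℝ))

def relaxFeasible (r : ℕ) (y1 y2 : (Fin n → ℕ) → ℝ) : Set (MvPolynomial (Fin n) ℝ) :=
  {θ | θ ∈ Θ ∧ (locMat n r θ y1).PosSemidef ∧ (locMat n r (-θ) y2).PosSemidef}

def sepFeasible (S1 S2 : Finset (Fin n → ℝ)) : Set (MvPolynomial (Fin n) ℝ) :=
  {θ | θ ∈ Θ ∧ (∀ x ∈ S1, 0 ≤ eval x θ) ∧ ∀ x ∈ S2, eval x θ ≤ 0}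

lemma relaxFeasible_antitone (y1 y2 : (Fin n → ℕ) → ℝ) :
    Antitone fun r => relaxFeasible Θ r y1 y2 :=
  fun _ _ hrs _ ⟨hθ, h1, h2⟩ =>
    ⟨hθ, posSemidef_locMat_of_le hrs h1, posSemidef_locMat_of_le hrs h2⟩

lemma sepFeasible_subset_relaxFeasible {S1 S2 : Finset (Fin n → ℝ)} {μ1 μ2 : (Fin n → ℝ) → ℝ}
    (hμ1 : ∀ x ∈ S1, 0 ≤ μ1 x) (hμ2 : ∀ x ∈ S2, 0 ≤ μ2 x) (r : ℕ) :
    sepFeasible Θ S1 S2 ⊆ relaxFeasible Θ r (moments S1 μ1) (moments S2 μ2) :=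
  fun θ ⟨hθ, h1, h2⟩ => ⟨hθ, posSemidef_locMat_moments hμ1 h1,
    posSemidef_locMat_moments hμ2 fun x hx => by simpa using h2 x hx⟩

lemma relaxFeasible_subset_sepFeasible {S1 S2 : Finset (Fin n → ℝ)} {μ1 μ2 : (Fin n → ℝ) → ℝ}
    (hμ1 : ∀ x ∈ S1, 0 < μ1 x) (hμ2 : ∀ x ∈ S2, 0 < μ2 x) {r : ℕ} (hr1 : #S1 ≤ r)
    (hr2 : #S2 ≤ r) :
    relaxFeasible Θ r (moments S1 μ1) (moments S2 μ2) ⊆ sepFeasible Θ S1 S2 :=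
  fun θ ⟨hθ, h1, h2⟩ => ⟨hθ, fun _ hx => eval_nonneg_of_posSemidef_locMat_moments hμ1 hr1 h1 hx,
    fun _ hx => by simpa using eval_nonneg_of_posSemidef_locMat_moments hμ2 hr2 h2 hx⟩

variable (f : MvPolynomial (Fin n) ℝ → ℝ)

lemma relaxVal_monotone (y1 y2 : (Fin n → ℕ) → ℝ) : Monotone fun r => relaxVal Θ f r y1 y2 :=
  fun _ _ hrs => sInf_le_sInf (Set.image_mono (relaxFeasible_antitone Θ y1 y2 hrs))

lemma relaxVal_le_sepVal {S1 S2 : Finset (Fin n → ℝ)} {μ1 μ2 : (Fin n → ℝ) → ℝ}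
    (hμ1 : ∀ x ∈ S1, 0 ≤ μ1 x) (hμ2 : ∀ x ∈ S2, 0 ≤ μ2 x) (r : ℕ) :
    relaxVal Θ f r (moments S1 μ1) (moments S2 μ2) ≤ sepVal Θ f S1 S2 :=
  sInf_le_sInf (Set.image_mono (sepFeasible_subset_relaxFeasible Θ hμ1 hμ2 r))

lemma relaxVal_eq_sepVal {S1 S2 : Finset (Fin n → ℝ)} {μ1 μ2 : (Fin n → ℝ) → ℝ}
    (hμ1 : ∀ x ∈ S1, 0 < μ1 x) (hμ2 : ∀ x ∈ S2, 0 < μ2 x) {r : ℕ} (hr1 : #S1 ≤ r)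
    (hr2 : #S2 ≤ r) :
    relaxVal Θ f r (moments S1 μ1) (moments S2 μ2) = sepVal Θ f S1 S2 :=
  (relaxVal_le_sepVal Θ f (fun x hx => (hμ1 x hx).le) (fun x hx => (hμ2 x hx).le) r).antisymm
    (sInf_le_sInf (Set.image_mono (relaxFeasible_subset_sepFeasible Θ hμ1 hμ2 hr1 hr2)))

end

theorem relaxVal_finite_convergence_general {n : ℕ} (S1 S2 : Finset (Fin n → ℝ))
    (Θ : Set (MvPolynomial (Fin n) ℝ))
    (f : MvPolynomial (Fin n) ℝ → ℝ)
    (μ1 μ2 : (Fin n → ℝ) → ℝ)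
    (hμ1 : ∀ x ∈ S1, 0 < μ1 x)
    (hμ2 : ∀ x ∈ S2, 0 < μ2 x) :
    (∀ r : ℕ, relaxVal Θ f r (moments S1 μ1) (moments S2 μ2)
        ≤ relaxVal Θ f (r + 1) (moments S1 μ1) (moments S2 μ2))
      ∧ (∀ r : ℕ, relaxVal Θ f r (moments S1 μ1) (moments S2 μ2) ≤ sepVal Θ f S1 S2)
      ∧ ∃ r0 : ℕ, ∀ r ≥ r0,
          relaxVal Θ f r (moments S1 μ1) (moments S2 μ2) = sepVal Θ f S1 S2 :=
  ⟨fun r => relaxVal_monotone Θ f _ _ r.le_succ,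
    relaxVal_le_sepVal Θ f (fun x hx => (hμ1 x hx).le) (fun x hx => (hμ2 x hx).le),
    max #S1 #S2, fun _ hr => relaxVal_eq_sepVal Θ f hμ1 hμ2 (le_of_max_le_left hr)
      (le_of_max_le_right hr)⟩

/-- if the probability measures `μ^i` have full support on `S_i`, then the
relaxation values are nondecreasing in `r`, bounded above by `τ^s`, and converge to `τ^s`
in finitely many steps. -/
theorem relaxVal_finite_convergence {n d : ℕ} (S1 S2 : Finset (Fin n → ℝ))
    (Θ : Set (MvPolynomial (Fin n) ℝ)) (hΘ : ∀ θ ∈ Θ, θ.totalDegree ≤ d)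
    (f : MvPolynomial (Fin n) ℝ → ℝ)
    (μ1 μ2 : (Fin n → ℝ) → ℝ)
    (hμ1 : ∀ x ∈ S1, 0 < μ1 x) (hμ1sum : ∑ x ∈ S1, μ1 x = 1)
    (hμ2 : ∀ x ∈ S2, 0 < μ2 x) (hμ2sum : ∑ x ∈ S2, μ2 x = 1) :
    (∀ r : ℕ, relaxVal Θ f r (moments S1 μ1) (moments S2 μ2)
        ≤ relaxVal Θ f (r + 1) (moments S1 μ1) (moments S2 μ2))
      ∧ (∀ r : ℕ, relaxVal Θ f r (moments S1 μ1) (moments S2 μ2) ≤ sepVal Θ f S1 S2)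
      ∧ ∃ r0 : ℕ, ∀ r ≥ r0,
          relaxVal Θ f r (moments S1 μ1) (moments S2 μ2) = sepVal Θ f S1 S2 :=
  relaxVal_finite_convergence_general S1 S2 Θ f μ1 μ2 hμ1 hμ2
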